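/- The subgroup Γ_C of SL(2,ℝ) generated by {M(α(n,k), r(n)) : n ≥ 1, 0 ≤ k ≤ 2^(n−1)−1} is a discrete subgroup, i.e., Γ_C with the topology induced from SL(2,ℝ) is a discrete topological space. -/

import Mathlib

/-!
The generators form a Schottky-type family. `M(α, r)` maps the outside of the closed disc of
radius `r` about `α` into the disc about `-α`, and its inverse does the converse. For the centres
`±α(n, k)` these discs are pairwise disjoint: the `α(n, k)` are the midpoints of the distinct
middle thirds removed in the construction of the Cantor set, and the discs occupy only the middle
half of each removed interval. By ping-pong, a nontrivial reduced word maps `I` into the disc of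
its first letter, so `Im (γ • I) ≤ 1/4` for every `γ ≠ 1` in `Γ_C`, while `Im (1 • I) = 1`.
Since `g ↦ Im (g • I)` is continuous, `1` is isolated in `Γ_C`.
-/

open UpperHalfPlane MatrixGroups

noncomputable section

/-- `s k = Σᵢ 2·tᵢ·3ⁱ` where `k = Σᵢ tᵢ·2ⁱ` is the binary expansion of `k`;
equivalently `s 0 = 0`, `s (2j) = 3·(s j)`, `s (2j+1) = 3·(s j) + 2`. -/
def s : ℕ → ℕ
  | 0 => 0
  | k + 1 =>
    if (k + 1) % 2 = 0 then 3 * s ((k + 1) / 2)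
    else 3 * s ((k + 1) / 2) + 2
decreasing_by all_goals (simp_wf; omega)

/-- The midpoint of the middle third removed at stage `n` from the `k`-th interval of
stage `n−1` of the middle-thirds construction on `[1,2]`. -/
def alphaC (n k : ℕ) : ℝ := 1 + (3 * s k + 1) / 3 ^ n + 1 / (2 * 3 ^ n)

/-- The common radius of the half-circles at stage `n`. -/
def radC (n : ℕ) : ℝ := 1 / (4 * 3 ^ n)

lemma radC_ne (n : ℕ) : radC n ≠ 0 := by unfold radC; positivity

/-- `N(β,β',r)` is the element of `SL(2,ℝ)` whose Möbius transformation has isometric circle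
the half-circle of radius `r` centered at `β`, mapped onto the half-circle of radius `r`
centered at `β'`. -/
def Nmat (β β' r : ℝ) (hr : r ≠ 0) : SL(2, ℝ) :=
  ⟨!![β' / r, -(β * β' + r ^ 2) / r; 1 / r, -β / r], by
    rw [Matrix.det_fin_two_of]; field_simp; ring⟩

/-- `M(α,r) := N(α, −α, r)`. -/
def Mmat (a r : ℝ) (hr : r ≠ 0) : SL(2, ℝ) := Nmat a (-a) r hr

/-- The subgroup of `SL(2,ℝ)` generated by the `M(α(n,k), r(n))`. -/
def ΓC : Subgroup SL(2, ℝ) :=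
  Subgroup.closure
    {g | ∃ n k : ℕ, 1 ≤ n ∧ k < 2 ^ (n - 1) ∧ g = Mmat (alphaC n k) (radC n) (radC_ne n)}

/-- The topology on `SL(2,ℝ)` induced from the matrix space. -/
instance : TopologicalSpace SL(2, ℝ) :=
  inferInstanceAs (TopologicalSpace {A : Matrix (Fin 2) (Fin 2) ℝ // A.det = 1})

open Metric Function

lemma s_eq_three_mul_add (k : ℕ) : s k = 3 * s (k / 2) + 2 * (k % 2) := by
  match k with
  | 0 => simp [s]
  | k + 1 =>
    rw [s]
    split_ifs with h <;> omega

lemma s_mod_three (k : ℕ) : s k % 3 = 2 * (k % 2) := by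
  rw [s_eq_three_mul_add]; omega

lemma s_div_three (k : ℕ) : s k / 3 = s (k / 2) := by
  rw [s_eq_three_mul_add]; omega

lemma s_div_three_pow (p k : ℕ) : s k / 3 ^ p = s (k / 2 ^ p) := by
  induction p generalizing k with
  | zero => simp
  | succ p ih =>
    rw [pow_succ, pow_succ, ← Nat.div_div_eq_div_mul, ih, s_div_three, Nat.div_div_eq_div_mul]

lemma s_div_three_pow_mod_three_ne_one (p k : ℕ) : s k / 3 ^ p % 3 ≠ 1 := by
  rw [s_div_three_pow, s_mod_three]; omega

lemma s_injective : Injective s := by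
  suffices ∀ n a b, a + b < n → s a = s b → a = b from fun a b => this _ a b (Nat.lt_succ_self _)
  intro n
  induction n with
  | zero => intro a b h; omega
  | succ n ih =>
    intro a b hab h
    have hmod : a % 2 = b % 2 := by
      have := s_mod_three a; have := s_mod_three b; omega
    rcases Nat.eq_zero_or_pos (a + b) with h0 | hpos
    · omega
    · have := ih (a / 2) (b / 2) (by omega) (by rw [← s_div_three, ← s_div_three, h])
      omega

/-- Scaled by `3 ^ (n + p)`, these are the middle thirds removed at stage `n + p` (from the
`j`-th interval) and at stage `n`: they do not overlap because no ternary digit of `s j` is `1`. -/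
lemma s_gap_disjoint {p : ℕ} (hp : 1 ≤ p) (a j : ℕ) :
    3 * s j + 2 ≤ (3 * a + 1) * 3 ^ p ∨ (3 * a + 2) * 3 ^ p ≤ 3 * s j + 1 := by
  by_contra! h
  obtain ⟨q, rfl⟩ : ∃ q, p = q + 1 := ⟨p - 1, by omega⟩
  have hdiv : (3 * s j + 1) / 3 ^ (q + 1) = 3 * a + 1 :=
    Nat.div_eq_of_lt_le (by omega) (by rw [show 3 * a + 1 + 1 = 3 * a + 2 from rfl]; omega)
  have hdigit : (3 * s j + 1) / 3 ^ (q + 1) = s j / 3 ^ q := by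
    rw [pow_succ', ← Nat.div_div_eq_div_mul]
    congr 1
    omega
  have := s_div_three_pow_mod_three_ne_one q j
  omega

lemma one_lt_alphaC (n k : ℕ) : 1 < alphaC n k := by
  unfold alphaC
  have : (0 : ℝ) < (3 * s k + 1) / 3 ^ n := by positivity
  have : (0 : ℝ) < 1 / (2 * 3 ^ n) := by positivity
  linarith

lemma radC_pos (n : ℕ) : 0 < radC n := by unfold radC; positivity

lemma radC_le (n : ℕ) : radC n ≤ 1 / 4 := by
  unfold radC
  gcongr
  linarith [one_le_pow₀ (M₀ := ℝ) (a := 3) (n := n) (by norm_num)]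

lemma radC_lt (n : ℕ) : radC n < 1 / (2 * 3 ^ n) := by
  unfold radC
  gcongr
  norm_num

lemma half_gap_le_abs_alphaC_sub_of_lt {n m : ℕ} (hnm : n < m) (k j : ℕ) :
    1 / (2 * 3 ^ n) + 1 / (2 * 3 ^ m) ≤ |alphaC n k - alphaC m j| := by
  obtain ⟨p, rfl⟩ := Nat.exists_eq_add_of_lt hnm
  have hsub : alphaC n k - alphaC (n + p + 1) j =
      ((6 * s k + 3) * 3 ^ (p + 1) - (6 * s j + 3)) / (2 * 3 ^ (n + p + 1)) := by
    unfold alphaC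
    rw [add_assoc n, pow_add]
    field_simp
    ring
  have hgap : (3 : ℝ) ^ (p + 1) + 1 ≤ |(6 * (s k : ℝ) + 3) * 3 ^ (p + 1) - (6 * s j + 3)| := by
    rcases s_gap_disjoint (Nat.le_add_left 1 p) (s k) j with h | h <;>
      have h' := (Nat.cast_le (α := ℝ)).mpr h <;> push_cast at h'
    · exact le_abs.mpr (Or.inl (by linarith))
    · exact le_abs.mpr (Or.inr (by linarith))
  rw [hsub, abs_div, abs_of_pos (by positivity : (0 : ℝ) < 2 * 3 ^ (n + p + 1)),
    le_div_iff₀ (by positivity)]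
  calc _ = (3 : ℝ) ^ (p + 1) + 1 := by rw [add_assoc n, pow_add]; field_simp
    _ ≤ _ := hgap

lemma inv_three_pow_le_abs_alphaC_sub {k j : ℕ} (hkj : k ≠ j) (n : ℕ) :
    1 / 3 ^ n ≤ |alphaC n k - alphaC n j| := by
  have hsub : alphaC n k - alphaC n j = 3 * ((s k : ℝ) - s j) / 3 ^ n := by
    unfold alphaC; ring
  have hs : (1 : ℝ) ≤ |(s k : ℝ) - s j| := by
    have : (s k : ℤ) ≠ s j := by exact_mod_cast s_injective.ne hkj
    exact_mod_cast Int.one_le_abs (sub_ne_zero.mpr this)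
  rw [hsub, abs_div, abs_mul, abs_of_pos (by positivity : (0 : ℝ) < 3 ^ n)]
  gcongr
  rw [abs_of_pos three_pos]
  linarith

lemma radC_add_radC_lt_abs_alphaC_sub {n k m j : ℕ} (h : (n, k) ≠ (m, j)) :
    radC n + radC m < |alphaC n k - alphaC m j| := by
  have hn := radC_lt n
  have hm := radC_lt m
  rcases lt_trichotomy n m with hnm | rfl | hnm
  · linarith [half_gap_le_abs_alphaC_sub_of_lt hnm k j]
  · have := inv_three_pow_le_abs_alphaC_sub (by simpa using h) n
    have : 1 / (2 * (3 : ℝ) ^ n) + 1 / (2 * 3 ^ n) = 1 / 3 ^ n := by field_simp; norm_num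
    linarith
  · rw [abs_sub_comm]
    linarith [half_gap_le_abs_alphaC_sub_of_lt hnm j k]

lemma Nmat_smul_sub_mul_sub (β β' r : ℝ) (hr : r ≠ 0) (z : ℍ) :
    ((Nmat β β' r hr • z : ℍ) - β' : ℂ) * (z - β) = -r ^ 2 := by
  have hz : (z : ℂ) - β ≠ 0 :=
    sub_ne_zero.mpr fun h => z.im_ne_zero (by simpa using congrArg Complex.im h)
  have hr' : (r : ℂ) ≠ 0 := by exact_mod_cast hr
  rw [coe_specialLinearGroup_apply]
  simp only [Nmat, Algebra.algebraMap_self, RingHom.id_apply, Matrix.of_apply, Matrix.cons_val',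
    Matrix.cons_val_zero, Matrix.cons_val_one, Matrix.cons_val_fin_one]
  push_cast
  field_simp
  rw [show (z : ℂ) + -β = z - β by ring, div_sub' hz, div_mul_cancel₀ _ hz]
  ring

lemma Nmat_inv_smul_sub_mul_sub (β β' r : ℝ) (hr : r ≠ 0) (z : ℍ) :
    (((Nmat β β' r hr)⁻¹ • z : ℍ) - β : ℂ) * (z - β') = -r ^ 2 := by
  have := Nmat_smul_sub_mul_sub β β' r hr ((Nmat β β' r hr)⁻¹ • z)
  rwa [smul_inv_smul, mul_comm] at this

lemma norm_lt_of_mul_eq_neg_sq {u v : ℂ} {r : ℝ} (hr : 0 < r) (huv : u * v = -r ^ 2)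
    (hv : r < ‖v‖) : ‖u‖ < r := by
  have : ‖u‖ * ‖v‖ = r ^ 2 := by
    rw [← norm_mul, huv, norm_neg, norm_pow, Complex.norm_real, Real.norm_eq_abs, abs_of_pos hr]
  nlinarith [norm_nonneg u]

section PingPong

variable {ι G X : Type*} [Group G] [MulAction G X]

theorem FreeGroup.IsReduced.prod_smul_mem_of_ping_pong (a : ι → G) (D : ι × Bool → Set X)
    (hD : Pairwise (Disjoint on D))
    (hmaps : ∀ x : ι × Bool, ∀ z ∉ D (x.1, !x.2), cond x.2 (a x.1) (a x.1)⁻¹ • z ∈ D x)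
    {z₀ : X} (hz₀ : ∀ x, z₀ ∉ D x) {x : ι × Bool} {L : List (ι × Bool)}
    (hL : FreeGroup.IsReduced (x :: L)) :
    ((x :: L).map fun y => cond y.2 (a y.1) (a y.1)⁻¹).prod • z₀ ∈ D x := by
  induction L generalizing x with
  | nil => simpa using hmaps x z₀ (hz₀ _)
  | cons y L ih =>
    rw [FreeGroup.isReduced_cons_cons] at hL
    have hy : y ≠ (x.1, !x.2) := by
      rintro rfl
      simpa using hL.1 rfl
    rw [List.map_cons, List.prod_cons, mul_smul]
    exact hmaps x _ fun h => (hD hy).ne_of_mem (ih hL.2) h rfl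

theorem FreeGroup.exists_lift_smul_mem_of_ping_pong (a : ι → G) (D : ι × Bool → Set X)
    (hD : Pairwise (Disjoint on D))
    (hmaps : ∀ x : ι × Bool, ∀ z ∉ D (x.1, !x.2), cond x.2 (a x.1) (a x.1)⁻¹ • z ∈ D x)
    {z₀ : X} (hz₀ : ∀ x, z₀ ∉ D x) {w : FreeGroup ι} (hw : w ≠ 1) :
    ∃ x, FreeGroup.lift a w • z₀ ∈ D x := by
  classical
  obtain ⟨x, L, hxL⟩ := List.exists_cons_of_ne_nil (mt FreeGroup.toWord_eq_nil_iff.mp hw)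
  refine ⟨x, ?_⟩
  rw [← FreeGroup.mk_toWord (x := w), FreeGroup.lift_mk, hxL]
  exact FreeGroup.IsReduced.prod_smul_mem_of_ping_pong a D hD hmaps hz₀
    (hxL ▸ FreeGroup.isReduced_toWord)

end PingPong

def genC (i : ℕ × ℕ) : SL(2, ℝ) := Mmat (alphaC i.1 i.2) (radC i.1) (radC_ne i.1)

/-- The letter `x` of the free group on `genC` maps the outside of `discC (x.1, !x.2)` into
`discC x`: `M(α, r)` maps the outside of the closed disc about `α` into the disc about `-α`. -/
def discC (x : (ℕ × ℕ) × Bool) : Set ℍ :=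
  (↑) ⁻¹' closedBall ((cond x.2 (-alphaC x.1.1 x.1.2) (alphaC x.1.1 x.1.2) : ℝ) : ℂ) (radC x.1.1)

lemma pairwise_disjoint_discC : Pairwise (Disjoint on discC) := by
  rintro ⟨⟨n, k⟩, b⟩ ⟨⟨m, j⟩, b'⟩ hne
  refine (closedBall_disjoint_closedBall ?_).preimage _
  rw [Complex.dist_of_im_eq (by simp), Complex.ofReal_re, Complex.ofReal_re, Real.dist_eq]
  have := one_lt_alphaC n k
  have := one_lt_alphaC m j
  have := radC_le n
  have := radC_le m
  cases b <;> cases b' <;> simp only [cond_true, cond_false]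
  · exact radC_add_radC_lt_abs_alphaC_sub (by simpa using hne)
  · rw [abs_of_pos (by linarith)]; linarith
  · rw [abs_of_neg (by linarith)]; linarith
  · rw [neg_sub_neg, abs_sub_comm]
    exact radC_add_radC_lt_abs_alphaC_sub (by simpa using hne)

lemma im_le_of_mem_discC {x : (ℕ × ℕ) × Bool} {z : ℍ} (hz : z ∈ discC x) : z.im ≤ 1 / 4 := by
  set c : ℝ := cond x.2 (-alphaC x.1.1 x.1.2) (alphaC x.1.1 x.1.2)
  calc z.im ≤ |((z : ℂ) - c).im| := by simp [le_abs_self]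
    _ ≤ dist (z : ℂ) c := (Complex.abs_im_le_norm _).trans_eq (Complex.dist_eq _ _).symm
    _ ≤ radC x.1.1 := hz
    _ ≤ 1 / 4 := radC_le _

lemma I_not_mem_discC (x : (ℕ × ℕ) × Bool) : I ∉ discC x := fun h => by
  have := im_le_of_mem_discC h
  norm_num at this

lemma smul_mem_discC (x : (ℕ × ℕ) × Bool) (z : ℍ) (hz : z ∉ discC (x.1, !x.2)) :
    cond x.2 (genC x.1) (genC x.1)⁻¹ • z ∈ discC x := by
  obtain ⟨⟨n, k⟩, b⟩ := x
  cases b <;> simp only [discC, genC, Mmat, Set.mem_preimage, mem_closedBall, Complex.dist_eq,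
    not_le, Bool.not_false, Bool.not_true, cond_false, cond_true] at hz ⊢
  · exact (norm_lt_of_mul_eq_neg_sq (radC_pos n)
      (Nmat_inv_smul_sub_mul_sub _ _ _ (radC_ne n) z) (by simpa using hz)).le
  · exact (norm_lt_of_mul_eq_neg_sq (radC_pos n)
      (Nmat_smul_sub_mul_sub _ _ _ (radC_ne n) z) (by simpa using hz)).le

lemma im_smul_I_le_of_mem_closure {γ : SL(2, ℝ)} (hγ : γ ∈ Subgroup.closure (Set.range genC))
    (hne : γ ≠ 1) : (γ • I).im ≤ 1 / 4 := by
  rw [← FreeGroup.range_lift_eq_closure] at hγ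
  obtain ⟨w, rfl⟩ := hγ
  obtain ⟨x, hx⟩ := FreeGroup.exists_lift_smul_mem_of_ping_pong genC discC
    pairwise_disjoint_discC smul_mem_discC I_not_mem_discC (w := w) (by rintro rfl; simp at hne)
  exact im_le_of_mem_discC hx

theorem discreteTopology_of_im_smul_I_le {H : Subgroup SL(2, ℝ)} {c : ℝ} (hc : c < 1)
    (h : ∀ γ ∈ H, γ ≠ 1 → (γ • I).im ≤ c) : DiscreteTopology H := by
  -- The topology on `SL(2, ℝ)` in scope agrees with Mathlib's only after unfolding, so instance
  -- search does not find these two instances.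
  have : IsTopologicalGroup SL(2, ℝ) := Matrix.SpecialLinearGroup.topologicalGroup
  have : ContinuousSMul SL(2, ℝ) ℍ := UpperHalfPlane.instContinuousSMulSL2R
  refine discreteTopology_of_isOpen_singleton_one (isOpen_induced_iff.mpr
    ⟨{g | c < (g • I).im}, isOpen_lt continuous_const (by fun_prop), ?_⟩)
  ext γ
  simp only [Set.mem_preimage, Set.mem_ofPred_eq, Set.mem_singleton_iff]
  constructor
  · intro hγ
    by_contra hne
    exact (h γ γ.2 (by simpa using hne)).not_gt hγ
  · rintro rfl
    simpa using hc

lemma ΓC_le_closure_range_genC : ΓC ≤ Subgroup.closure (Set.range genC) :=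
  Subgroup.closure_mono <| by rintro g ⟨n, k, -, -, rfl⟩; exact ⟨(n, k), rfl⟩

/-- `Γ_C` is a discrete subgroup of `SL(2,ℝ)`. -/
theorem stmt_10 : DiscreteTopology ΓC :=
  discreteTopology_of_im_smul_I_le (by norm_num : (1 / 4 : ℝ) < 1) fun _ hγ hne =>
    im_smul_I_le_of_mem_closure (ΓC_le_closure_range_genC hγ) hne
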